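/- Let Σ = {0,1,2,3} with ⊕ bitwise XOR, and let lₙ•(x) = lₙ(x) ⊕ 2 if x ∈ {0,2}ⁿ, else lₙ(x), where lₙ(x₁,…,xₙ) = x₁ ⊕ ⋯ ⊕ xₙ. Then every autotopy of lₙ• (n ≥ 3) is also an autotopy of lₙ, and moreover every permutation occurring in such an autotopy maps the set {0,2} onto {0,2} or onto {1,3}. -/

import Mathlib

def IsAutotopy {α : Type} {n : ℕ} (f : (Fin n → α) → α)
    (θ : Fin (n + 1) → Equiv.Perm α) : Prop :=
  ∀ x : Fin n → α, f (fun i => θ i.succ (x i)) = θ 0 (f x)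

/-- `⊕` on `Σ = {0,1,2,3}`: bitwise XOR (the group operation of `Z₂ × Z₂`). -/
def xor4 (x y : Fin 4) : Fin 4 :=
  ⟨x.val ^^^ y.val, Nat.xor_lt_two_pow (n := 2) x.isLt y.isLt⟩

/-- `lₙ(x₁,…,xₙ) = x₁ ⊕ ⋯ ⊕ xₙ`. -/
def linQ {n : ℕ} (x : Fin n → Fin 4) : Fin 4 := (List.ofFn x).foldr xor4 0

/-- `lₙ•(x) = lₙ(x) ⊕ 2` if `x ∈ {0,2}ⁿ`, and `lₙ•(x) = lₙ(x)` otherwise. -/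
def linBullet {n : ℕ} (x : Fin n → Fin 4) : Fin 4 :=
  if ∀ i, x i = 0 ∨ x i = 2 then xor4 (linQ x) 2 else linQ x

/-!
Fixing all coordinates of `lₙ•` but the `i`-th gives a permutation of `Σ`: a translation
`u ↦ u ⊕ s`, composed with the transposition `(0 2)` exactly when the other coordinates all lie in
`{0,2}`. Translations of `(Z₂)²` are even, so the sign of this row records that condition. An
autotopy conjugates rows into rows, `row(θx) ∘ θᵢ = θ₀ ∘ row(x)`; for `n ≥ 3` one finds `x` whose
rows on both sides are translations, so all `θᵢ` have the sign of `θ₀`, and then autotopies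
preserve the condition. Hence every `θᵢ` (`i ≥ 1`) preserves `{0,2}` and so commutes with `⊕ 2`
on it. On `{0,2}ⁿ`, flipping one coordinate by `⊕ 2` turns `lₙ•` into `lₙ`, which transfers the
autotopy equation from `lₙ•` to `lₙ`; finally `θ₀` preserves `{0,2}` because `lₙ` maps
`{0,2}ⁿ` into it.
-/

open Function Equiv Finset

theorem Equiv.Perm.image_eq_of_mapsTo {α : Type*} [Finite α] (p : Perm α) {s : Set α}
    (h : Set.MapsTo p s s) : p '' s = s :=
  (((Set.toFinite s).injOn_iff_bijOn_of_mapsTo h).1 p.injective.injOn).image_eq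

theorem IsAutotopy.sign_row_mul_sign_succ {α : Type} [Fintype α] [DecidableEq α] {n : ℕ}
    {f : (Fin n → α) → α} {θ : Fin (n + 1) → Perm α} (hθ : IsAutotopy f θ)
    (r : (Fin n → α) → Fin n → Perm α) (hr : ∀ x i u, f (update x i u) = r x i u)
    (x : Fin n → α) (i : Fin n) :
    Perm.sign (r (fun m => θ m.succ (x m)) i) * Perm.sign (θ i.succ) =
      Perm.sign (θ 0) * Perm.sign (r x i) := by
  have conj : r (fun m => θ m.succ (x m)) i * θ i.succ = θ 0 * r x i := by
    ext u
    rw [Perm.mul_apply, Perm.mul_apply, ← hr, ← hr, ← hθ]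
    congr 1
    funext m
    exact (apply_update (fun m : Fin n => θ m.succ) x i u m).symm
  rw [← map_mul, ← map_mul, conj]

theorem xor4_xor4_cancel_right : ∀ a d : Fin 4, xor4 (xor4 a d) d = a := by decide

theorem xor4_right_comm : ∀ a b c : Fin 4, xor4 (xor4 a b) c = xor4 (xor4 a c) b := by decide

theorem xor4_two_mem_iff : ∀ a : Fin 4, (xor4 a 2 = 0 ∨ xor4 a 2 = 2) ↔ (a = 0 ∨ a = 2) := by
  decide

theorem xor4_two_ne_self : ∀ a : Fin 4, xor4 a 2 ≠ a := by decide

theorem eq_xor4_two_of_ne : ∀ a b : Fin 4, (a = 0 ∨ a = 2) → (b = 0 ∨ b = 2) → a ≠ b →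
    a = xor4 b 2 := by
  decide

theorem Equiv.Perm.apply_xor4_two {p : Perm (Fin 4)} (hp : Set.MapsTo p {0, 2} {0, 2})
    {u : Fin 4} (hu : u = 0 ∨ u = 2) : p (xor4 u 2) = xor4 (p u) 2 :=
  eq_xor4_two_of_ne _ _ (hp ((xor4_two_mem_iff u).2 hu)) (hp hu)
    (p.injective.ne (xor4_two_ne_self u))

theorem swap_zero_two_apply : ∀ u : Fin 4,
    swap 0 2 u = if u = 0 ∨ u = 2 then xor4 u 2 else u := by
  decide

def xorPerm (d : Fin 4) : Perm (Fin 4) :=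
  Involutive.toPerm (xor4 · d) (xor4_xor4_cancel_right · d)

@[simp]
theorem xorPerm_apply (d u : Fin 4) : xorPerm d u = xor4 u d := rfl

theorem sign_xorPerm : ∀ d : Fin 4, Perm.sign (xorPerm d) = 1 := by decide

def bits : Fin 4 → ZMod 2 × ZMod 2 := ![(0, 0), (1, 0), (0, 1), (1, 1)]

theorem bits_zero : bits 0 = 0 := rfl

theorem bits_xor4 : ∀ a b : Fin 4, bits (xor4 a b) = bits a + bits b := by decide

theorem bits_injective : Injective bits := by decide

theorem bits_fst_eq_zero_iff : ∀ a : Fin 4, (bits a).1 = 0 ↔ (a = 0 ∨ a = 2) := by decide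

theorem bits_linQ {n : ℕ} (x : Fin n → Fin 4) : bits (linQ x) = ∑ i, bits (x i) := by
  have foldr_eq : ∀ L : List (Fin 4), bits (L.foldr xor4 0) = (L.map bits).sum := by
    intro L
    induction L with
    | nil => rfl
    | cons a t ih => simp [bits_xor4, ih]
  rw [linQ, foldr_eq, List.map_ofFn, List.sum_ofFn]
  rfl

theorem bits_linQ_update {n : ℕ} (x : Fin n → Fin 4) (i : Fin n) (u : Fin 4) :
    bits (linQ (update x i u)) = bits u + ∑ m ∈ univ.erase i, bits (x m) := by
  rw [bits_linQ, ← sum_erase_add _ _ (mem_univ i), update_self, add_comm]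
  congr 1
  exact sum_congr rfl fun m hm => by rw [update_of_ne (ne_of_mem_erase hm)]

theorem linQ_update {n : ℕ} (x : Fin n → Fin 4) (i : Fin n) (u : Fin 4) :
    linQ (update x i u) = xor4 u (linQ (update x i 0)) := by
  apply bits_injective
  rw [bits_xor4, bits_linQ_update, bits_linQ_update, bits_zero, zero_add]

theorem linQ_update_xor4 {n : ℕ} (x : Fin n → Fin 4) (i : Fin n) (d : Fin 4) :
    linQ (update x i (xor4 (x i) d)) = xor4 (linQ x) d := by
  apply bits_injective
  rw [bits_linQ_update, bits_xor4, bits_xor4, bits_linQ, ← add_sum_erase _ _ (mem_univ i)]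
  abel

theorem linQ_update_zero {n : ℕ} (i : Fin n) (v : Fin 4) : linQ (update (fun _ => 0) i v) = v := by
  apply bits_injective
  simp [bits_linQ_update, bits_zero]

theorem linQ_eq_zero_or_eq_two {n : ℕ} (x : Fin n → Fin 4) (hx : ∀ i, x i = 0 ∨ x i = 2) :
    linQ x = 0 ∨ linQ x = 2 := by
  rw [← bits_fst_eq_zero_iff, bits_linQ, Prod.fst_sum]
  exact sum_eq_zero fun i _ => (bits_fst_eq_zero_iff _).2 (hx i)

theorem linBullet_update_xor4_two {n : ℕ} (x : Fin n → Fin 4) (hx : ∀ m, x m = 0 ∨ x m = 2)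
    (i : Fin n) : linBullet (update x i (xor4 (x i) 2)) = linQ x := by
  rw [linBullet, if_pos, linQ_update_xor4, xor4_xor4_cancel_right]
  rw [forall_update_iff x (fun _ v => v = 0 ∨ v = 2)]
  exact ⟨(xor4_two_mem_iff _).2 (hx i), fun m _ => hx m⟩

def rowPerm {n : ℕ} (x : Fin n → Fin 4) (i : Fin n) : Perm (Fin 4) :=
  xorPerm (linQ (update x i 0)) * if ∀ m, m ≠ i → x m = 0 ∨ x m = 2 then swap 0 2 else 1

theorem linBullet_update {n : ℕ} (x : Fin n → Fin 4) (i : Fin n) (u : Fin 4) :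
    linBullet (update x i u) = rowPerm x i u := by
  simp only [linBullet, forall_update_iff x (fun _ v => v = 0 ∨ v = 2)]
  rw [linQ_update, rowPerm, Perm.mul_apply, xorPerm_apply]
  by_cases hx : ∀ m, m ≠ i → x m = 0 ∨ x m = 2
  · simp only [and_iff_left hx, if_pos hx, swap_zero_two_apply]
    split_ifs
    exacts [xor4_right_comm _ _ _, rfl]
  · simp only [hx, and_false, if_false, Perm.one_apply]

theorem sign_rowPerm {n : ℕ} (x : Fin n → Fin 4) (i : Fin n) :
    Perm.sign (rowPerm x i) = if ∀ m, m ≠ i → x m = 0 ∨ x m = 2 then -1 else 1 := by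
  rw [rowPerm]
  split_ifs <;> simp [sign_xorPerm]

namespace IsAutotopy

variable {n : ℕ} {θ : Fin (n + 1) → Perm (Fin 4)}

theorem mapsTo_zero_of_linQ (hθ : IsAutotopy linQ θ) (hn : 0 < n)
    (hsucc : ∀ j : Fin n, Set.MapsTo (θ j.succ) {0, 2} {0, 2}) :
    Set.MapsTo (θ 0) {0, 2} {0, 2} := by
  intro v hv
  rw [← linQ_update_zero ⟨0, hn⟩ v, ← hθ]
  refine linQ_eq_zero_or_eq_two _ fun m => hsucc m ?_
  rw [update_apply]
  split_ifs
  exacts [hv, Or.inl rfl]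

theorem sign_rowPerm_mul_sign_succ (hθ : IsAutotopy linBullet θ) (x : Fin n → Fin 4)
    (i : Fin n) :
    (if ∀ m, m ≠ i → θ m.succ (x m) = 0 ∨ θ m.succ (x m) = 2 then -1 else 1) *
        Perm.sign (θ i.succ) =
      Perm.sign (θ 0) * if ∀ m, m ≠ i → x m = 0 ∨ x m = 2 then -1 else 1 := by
  rw [← sign_rowPerm, ← sign_rowPerm]
  exact hθ.sign_row_mul_sign_succ rowPerm linBullet_update x i

theorem sign_succ_eq_sign_zero (hθ : IsAutotopy linBullet θ) (hn : 3 ≤ n) (i : Fin n) :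
    Perm.sign (θ i.succ) = Perm.sign (θ 0) := by
  have hcard : 3 ≤ Cardinal.mk (Fin n) := by simpa using hn
  obtain ⟨k, hki, -⟩ := Cardinal.exists_ne_ne_of_three_le hcard i i
  obtain ⟨l, hli, hlk⟩ := Cardinal.exists_ne_ne_of_three_le hcard i k
  -- coordinate `k` is `1`, and so is coordinate `l` of the image: both rows are translations
  have h := hθ.sign_rowPerm_mul_sign_succ (update (fun m => (θ m.succ).symm 1) k 1) i
  rwa [if_neg, if_neg, mul_one, one_mul] at h
  · intro hx
    simpa using hx k hki
  · intro hx
    simpa [update_of_ne hlk] using hx l hli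

theorem forall_ne_mem_iff (hθ : IsAutotopy linBullet θ) (hn : 3 ≤ n) (x : Fin n → Fin 4)
    (i : Fin n) :
    (∀ m, m ≠ i → θ m.succ (x m) = 0 ∨ θ m.succ (x m) = 2) ↔
      ∀ m, m ≠ i → x m = 0 ∨ x m = 2 := by
  have h := hθ.sign_rowPerm_mul_sign_succ x i
  rw [hθ.sign_succ_eq_sign_zero hn, mul_comm, mul_left_cancel_iff] at h
  split_ifs at h with h₁ h₂ h₂
  · exact iff_of_true h₁ h₂
  · exact absurd h (by decide)
  · exact absurd h (by decide)
  · exact iff_of_false h₁ h₂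

theorem succ_apply_mem_iff (hθ : IsAutotopy linBullet θ) (hn : 3 ≤ n) (j : Fin n) (u : Fin 4) :
    θ j.succ u = 0 ∨ θ j.succ u = 2 ↔ u = 0 ∨ u = 2 := by
  have hcard : 3 ≤ Cardinal.mk (Fin n) := by simpa using hn
  have hzero : ∀ m : Fin n, θ m.succ 0 = 0 ∨ θ m.succ 0 = 2 := by
    intro m
    obtain ⟨i, him, -⟩ := Cardinal.exists_ne_ne_of_three_le hcard m m
    exact (hθ.forall_ne_mem_iff hn (fun _ => 0) i).2 (fun _ _ => Or.inl rfl) m him.symm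
  obtain ⟨i, hij, -⟩ := Cardinal.exists_ne_ne_of_three_le hcard j j
  have h := hθ.forall_ne_mem_iff hn (update (fun _ => 0) j u) i
  simp only [apply_update (fun m : Fin n => θ m.succ)] at h
  rw [forall_update_iff _ (fun m v => m ≠ i → v = 0 ∨ v = 2),
    forall_update_iff _ (fun m v => m ≠ i → v = 0 ∨ v = 2)] at h
  simpa [hij.symm, hzero] using h

theorem mapsTo_succ (hθ : IsAutotopy linBullet θ) (hn : 3 ≤ n) (j : Fin n) :
    Set.MapsTo (θ j.succ) {0, 2} {0, 2} :=
  fun u => (hθ.succ_apply_mem_iff hn j u).2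

theorem isAutotopy_linQ (hθ : IsAutotopy linBullet θ) (hn : 3 ≤ n) : IsAutotopy linQ θ := by
  intro x
  by_cases hx : ∀ m, x m = 0 ∨ x m = 2
  · have hθx : ∀ m, θ m.succ (x m) = 0 ∨ θ m.succ (x m) = 2 :=
      fun m => (hθ.succ_apply_mem_iff hn m _).2 (hx m)
    let i : Fin n := ⟨0, by omega⟩
    have hflip : update (fun m => θ m.succ (x m)) i (xor4 (θ i.succ (x i)) 2) =
        fun m => θ m.succ (update x i (xor4 (x i) 2) m) := by
      rw [← Perm.apply_xor4_two (hθ.mapsTo_succ hn i) (hx i)]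
      funext m
      exact (apply_update (fun m : Fin n => θ m.succ) x i _ m).symm
    calc linQ (fun m => θ m.succ (x m))
        = linBullet (update (fun m => θ m.succ (x m)) i (xor4 (θ i.succ (x i)) 2)) :=
          (linBullet_update_xor4_two _ hθx i).symm
      _ = θ 0 (linBullet (update x i (xor4 (x i) 2))) := by rw [hflip, hθ]
      _ = θ 0 (linQ x) := by rw [linBullet_update_xor4_two x hx i]
  · have hθx : ¬ ∀ m, θ m.succ (x m) = 0 ∨ θ m.succ (x m) = 2 := by
      simpa only [hθ.succ_apply_mem_iff hn] using hx
    simpa only [linBullet, if_neg hx, if_neg hθx] using hθ x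

end IsAutotopy

/-- For `n ≥ 3`, every autotopy of `lₙ•` is an autotopy of `lₙ`, and every permutation
occurring in such an autotopy maps `{0,2}` onto `{0,2}` or onto `{1,3}`. -/
theorem autotopy_linBullet_is_autotopy_lin (n : ℕ) (hn : 3 ≤ n)
    (θ : Fin (n + 1) → Equiv.Perm (Fin 4))
    (hθ : IsAutotopy (linBullet (n := n)) θ) :
    IsAutotopy (linQ (n := n)) θ ∧
    ∀ i : Fin (n + 1),
      (θ i) '' ({0, 2} : Set (Fin 4)) = {0, 2} ∨
      (θ i) '' ({0, 2} : Set (Fin 4)) = {1, 3} := by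
  have hlin := hθ.isAutotopy_linQ hn
  refine ⟨hlin, fun i => Or.inl (Perm.image_eq_of_mapsTo _ ?_)⟩
  cases i using Fin.cases with
  | zero => exact hlin.mapsTo_zero_of_linQ (by omega) (hθ.mapsTo_succ hn)
  | succ j => exact hθ.mapsTo_succ hn j
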